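/- Let R = K[x] and P_n the two-term complex R --x^n--> R in degrees -1, 0. For positive integers l, m, n with max(0, l-m) < i ≤ l and max(0, n-m) ≤ j < n, the composition (x^j_{m,n})[1] ∘ y^i_{l,m} in K^b(proj R) equals y^{i-j}_{l,n} if i - j > max(0, l-n), and equals 0 otherwise. -/

import Mathlib

/- Setup: `R = K[x]`, the two-term cochain complexes `P n = (R --x^n--> R)` in degrees
`-1, 0`, and the morphisms `x^i_{m,n}` and `y^i_{m,n}` in the bounded homotopy category
`K^b(proj R)` (realized inside the homotopy category of cochain complexes of
`R`-modules). -/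

noncomputable section
open CategoryTheory CategoryTheory.Limits Polynomial ZeroObject CategoryTheory.Pretriangulated

variable (K : Type) [Field K]

abbrev RMod := ModuleCat.of (Polynomial K) (Polynomial K)

/-- Multiplication by `x^a` on `R = K[x]`. -/
def mulX (a : ℕ) : RMod K ⟶ RMod K :=
  ModuleCat.ofHom (LinearMap.mulLeft (Polynomial K) ((X : Polynomial K) ^ a))

lemma mulX_comp (a b : ℕ) : mulX K a ≫ mulX K b = mulX K (a + b) := by
  ext p : 2
  simp only [mulX, ModuleCat.hom_comp, ModuleCat.hom_ofHom, LinearMap.comp_apply,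
    LinearMap.mulLeft_apply]
  rw [← mul_assoc, ← pow_add, add_comm]

/-- The graded pieces of the two-term complexes `P n`. -/
def Pobj : ℤ → ModuleCat (Polynomial K) := fun i =>
  if i = -1 ∨ i = 0 then RMod K else ModuleCat.of (Polynomial K) PUnit

lemma PobjNeg : Pobj K (-1) = RMod K := by simp [Pobj]
lemma PobjZero : Pobj K 0 = RMod K := by simp [Pobj]

/-- The differential of `P n`. -/
def Pd (n : ℕ) : ∀ i : ℤ, Pobj K i ⟶ Pobj K (i + 1) := fun i =>
  if h : i = -1 then
    eqToHom (by rw [h, PobjNeg]) ≫ mulX K n ≫ eqToHom (by rw [h]; norm_num [PobjZero])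
  else 0

/-- The two-term complex `P n = (R --x^n--> R)` in degrees `-1, 0`. -/
def P (n : ℕ) : CochainComplex (ModuleCat (Polynomial K)) ℤ :=
  CochainComplex.of (Pobj K) (Pd K n) (fun i => by
    by_cases h : i = -1
    · have h2 : Pd K n (i + 1) = 0 := dif_neg (by omega)
      rw [h2, Limits.comp_zero]
    · have h1 : Pd K n i = 0 := dif_neg h
      rw [h1, Limits.zero_comp])

lemma P_d_eq_zero (n : ℕ) (i j : ℤ) (hi : i ≠ -1) : (P K n).d i j = 0 := by
  by_cases h : i + 1 = j
  · subst h
    dsimp only [P]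
    rw [CochainComplex.of_d]
    exact dif_neg hi
  · exact HomologicalComplex.shape _ _ _ (by simpa using h)

/-- The components of the chain map which is multiplication by `x^a` in degree `-1`
and by `x^b` in degree `0`. -/
def xComp (a b : ℕ) : ∀ i : ℤ, Pobj K i ⟶ Pobj K i := fun i =>
  if h : i = -1 then eqToHom (by rw [h, PobjNeg]) ≫ mulX K a ≫ eqToHom (by rw [h, PobjNeg])
  else if h0 : i = 0 then
    eqToHom (by rw [h0, PobjZero]) ≫ mulX K b ≫ eqToHom (by rw [h0, PobjZero])
  else 0

/-- The chain map `P m ⟶ P n` which is multiplication by `x^a` in degree `-1` and by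
`x^b` in degree `0`; it commutes with the differentials since `a + n = b + m`. -/
def xMap (m n a b : ℕ) (hab : a + n = b + m) : P K m ⟶ P K n :=
  CochainComplex.ofHom (xComp K a b) (by
    intro i
    dsimp only [P]
    rw [CochainComplex.of_d, CochainComplex.of_d]
    by_cases hi : i = -1
    · subst hi
      show xComp K a b (-1) ≫ Pd K n (-1) = Pd K m (-1) ≫ xComp K a b (-1 + 1)
      rw [show xComp K a b (-1 + 1) = xComp K a b 0 from rfl]
      rw [show xComp K a b (-1) = eqToHom (PobjNeg K) ≫ mulX K a ≫ eqToHom (PobjNeg K).symm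
          from dif_pos rfl]
      rw [show xComp K a b 0 = eqToHom (PobjZero K) ≫ mulX K b ≫ eqToHom (PobjZero K).symm
          from by rw [xComp, dif_neg (by norm_num), dif_pos rfl]]
      rw [show Pd K n (-1) = eqToHom (PobjNeg K) ≫ mulX K n ≫
            eqToHom (by norm_num [PobjZero] : RMod K = Pobj K (-1 + 1))
          from dif_pos rfl]
      rw [show Pd K m (-1) = eqToHom (PobjNeg K) ≫ mulX K m ≫
            eqToHom (by norm_num [PobjZero] : RMod K = Pobj K (-1 + 1))
          from dif_pos rfl]
      simp only [Category.assoc, eqToHom_trans_assoc, eqToHom_refl, Category.id_comp]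
      try simp only [Category.comp_id]
      rw [← Category.assoc (mulX K a), mulX_comp, ← Category.assoc (mulX K m), mulX_comp, hab]
      rw [Nat.add_comm b m]
    · have h1 : Pd K m i = 0 := dif_neg hi
      have h2 : Pd K n i = 0 := dif_neg hi
      rw [h1, h2, Limits.comp_zero, Limits.zero_comp])

/-- The components of `y^i_{m,n}`. -/
def yComp (m n a : ℕ) : ∀ i : ℤ, (P K m).X i ⟶ ((P K n)⟦(1 : ℤ)⟧).X i := fun i =>
  if h : i = -1 then
    eqToHom (by rw [h]; exact PobjNeg K) ≫ mulX K a ≫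
      eqToHom (by rw [h]; show RMod K = Pobj K (-1 + 1); norm_num [PobjZero])
  else 0

/-- The chain map `P m ⟶ (P n)⟦1⟧` whose only nonzero component is multiplication by
`x^a` in degree `-1` (landing in the degree `0` part of `P n`). -/
def yMap (m n a : ℕ) : P K m ⟶ (P K n)⟦(1 : ℤ)⟧ where
  f := yComp K m n a
  comm' := fun i j hij => by
    have hj : i + 1 = j := hij
    have hY : ∀ i' j' : ℤ, i' ≠ -2 → ((P K n)⟦(1 : ℤ)⟧).d i' j' = 0 := fun i' j' h => by
      rw [CochainComplex.shiftFunctor_obj_d',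
        P_d_eq_zero K n _ _ (by change i' + 1 ≠ -1; omega), smul_zero]
      rfl
    by_cases hi : i = -1
    · rw [hY i j (by omega), Limits.comp_zero,
        show yComp K m n a j = 0 from dif_neg (by omega), Limits.comp_zero]
    · rw [show yComp K m n a i = 0 from dif_neg hi, Limits.zero_comp]
      by_cases hj' : j = -1
      · rw [P_d_eq_zero K m i j hi, Limits.zero_comp]
      · rw [show yComp K m n a j = 0 from dif_neg hj', Limits.comp_zero]

/-- The homotopy category of cochain complexes of `K[x]`-modules, in which the bounded
homotopy category of finitely generated projectives embeds fully faithfully. -/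
abbrev KbT := HomotopyCategory (ModuleCat (Polynomial K)) (ComplexShape.up ℤ)

abbrev Q : CochainComplex (ModuleCat (Polynomial K)) ℤ ⥤ KbT K :=
  HomotopyCategory.quotient _ _

/-- `P n` as an object of the homotopy category. -/
abbrev Pbar (n : ℕ) : KbT K := (Q K).obj (P K n)

/-- The morphism `x^i_{m,n} : P m ⟶ P n` in the homotopy category, defined for
`max (0, n - m) ≤ i` (expressed with truncated subtraction on `ℕ`); in degree `-1` it is
multiplication by `x^(i+m-n)` and in degree `0` multiplication by `x^i`. -/
def xbar (m n i : ℕ) (h : n - m ≤ i) : Pbar K m ⟶ Pbar K n :=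
  (Q K).map (xMap K m n (i + m - n) i (by omega))

/-- The identification `Q(P n ⟦1⟧) ≅ (Q (P n))⟦1⟧` in the homotopy category. -/
def shIso (n : ℕ) : (Q K).obj ((P K n)⟦(1 : ℤ)⟧) ≅ (Pbar K n)⟦(1 : ℤ)⟧ :=
  ((Q K).commShiftIso (1 : ℤ)).app (P K n)

/-- The morphism `y^i_{m,n} : P m ⟶ (P n)[1]` in the homotopy category, defined for
`i ≤ m`; its only nonzero component is multiplication by `x^(m-i)` in degree `-1`. -/
def ybar (m n i : ℕ) (_h : i ≤ m) : Pbar K m ⟶ (Pbar K n)⟦(1 : ℤ)⟧ :=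
  (Q K).map (yMap K m n (m - i)) ≫ (shIso K n).hom

/-! Composing `y^i_{l,m}` with the shift of `x^j_{m,n}` gives, already at the level of chain
maps, the map `P l ⟶ (P n)⟦1⟧` that multiplies by `x^a`, `a = (l - i) + j`, from degree `-1`
of `P l` to degree `0` of `P n`. This is `y^(i-j)_{l,n}` when `a < l` and `a < n`; otherwise
it factors through the differential `x^l` of `P l` or through the differential `x^n` of `P n`,
and is null-homotopic. -/

namespace CochainComplex

variable {C : Type*} [Category C] [Preadditive C] {F G : CochainComplex C ℤ}

open HomComplex

lemma HomComplex.Cochain.ofHom_eq_single (φ : F ⟶ G) (p : ℤ) (hφ : ∀ q, q ≠ p → φ.f q = 0) :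
    Cochain.ofHom φ = Cochain.single (φ.f p) 0 := by
  ext q
  by_cases hq : q = p
  · subst hq
    simp
  · rw [Cochain.ofHom_v, hφ q hq, Cochain.single_v_eq_zero _ _ _ _ _ hq]

lemma quotient_map_eq_zero_of_eq_d_comp (φ : F ⟶ G) {p q : ℤ} (hpq : p + 1 = q)
    (hφ : ∀ r, r ≠ p → φ.f r = 0) (h : F.X q ⟶ G.X p) (hφh : φ.f p = F.d p q ≫ h)
    (hd : h ≫ G.d p q = 0) :
    (HomotopyCategory.quotient C (ComplexShape.up ℤ)).map φ = 0 := by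
  rw [← Functor.map_zero (HomotopyCategory.quotient C (ComplexShape.up ℤ)) F G]
  refine HomotopyCategory.eq_of_homotopy _ _ ((Cochain.equivHomotopy φ 0).symm
    ⟨Cochain.single h (-1), ?_⟩)
  rw [Cochain.δ_single h (-1) 0 (by norm_num) p q hpq hpq, hd,
    Cochain.ofHom_eq_single φ p hφ, hφh]
  simp

lemma quotient_map_eq_zero_of_eq_comp_d (φ : F ⟶ G) {p q : ℤ} (hpq : p + 1 = q)
    (hφ : ∀ r, r ≠ q → φ.f r = 0) (h : F.X q ⟶ G.X p) (hφh : φ.f q = h ≫ G.d p q)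
    (hd : F.d p q ≫ h = 0) :
    (HomotopyCategory.quotient C (ComplexShape.up ℤ)).map φ = 0 := by
  rw [← Functor.map_zero (HomotopyCategory.quotient C (ComplexShape.up ℤ)) F G]
  refine HomotopyCategory.eq_of_homotopy _ _ ((Cochain.equivHomotopy φ 0).symm
    ⟨Cochain.single h (-1), ?_⟩)
  rw [Cochain.δ_single h (-1) 0 (by norm_num) p q hpq hpq, hd,
    Cochain.ofHom_eq_single φ q hφ, hφh]
  simp

end CochainComplex

lemma yMap_comp_shift_xMap (l m n c a b : ℕ) (hab : a + n = b + m) :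
    yMap K l m c ≫ (xMap K m n a b hab)⟦(1 : ℤ)⟧' = yMap K l n (c + b) := by
  ext i : 1
  by_cases hi : i = -1
  · subst hi
    -- the `eqToHom`s around the components are identities up to unfolding `Pobj`
    exact mulX_comp K c b
  · change yComp K l m c i ≫ _ = yComp K l n (c + b) i
    rw [yComp, yComp, dif_neg hi, dif_neg hi, Limits.zero_comp]

lemma Q_map_yMap_eq_zero_of_le_left (l n a : ℕ) (h : l ≤ a) : (Q K).map (yMap K l n a) = 0 := by
  refine CochainComplex.quotient_map_eq_zero_of_eq_d_comp _ (p := -1) (q := 0) (by norm_num)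
    (fun i hi => dif_neg hi) (eqToHom (PobjZero K) ≫ mulX K (a - l) ≫ eqToHom (PobjZero K).symm)
    ?_ ?_
  · change mulX K a = mulX K l ≫ mulX K (a - l)
    rw [mulX_comp, Nat.add_sub_cancel' h]
  · rw [CochainComplex.shiftFunctor_obj_d', P_d_eq_zero K n _ _ (by norm_num), smul_zero]
    exact Limits.comp_zero

lemma Q_map_yMap_eq_zero_of_le_right (l n a : ℕ) (h : n ≤ a) : (Q K).map (yMap K l n a) = 0 := by
  refine CochainComplex.quotient_map_eq_zero_of_eq_comp_d _ (p := -2) (q := -1) (by norm_num)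
    (fun i hi => dif_neg hi) (-(eqToHom (PobjNeg K) ≫ mulX K (a - n) ≫ eqToHom (PobjNeg K).symm))
    ?_ ?_
  · rw [CochainComplex.shiftFunctor_obj_d', Int.negOnePow_one, Units.neg_smul, one_smul]
    change mulX K a = (-mulX K (a - n)) ≫ (-mulX K n)
    rw [Preadditive.comp_neg, Preadditive.neg_comp, neg_neg, mulX_comp, Nat.sub_add_cancel h]
  · rw [P_d_eq_zero K l _ _ (by norm_num)]
    exact Limits.zero_comp

lemma ybar_comp_shift_xbar (l m n i j : ℕ) (hi : i ≤ l) (hj : n - m ≤ j) :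
    ybar K l m i hi ≫ (xbar K m n j hj)⟦(1 : ℤ)⟧' =
      (Q K).map (yMap K l n (l - i + j)) ≫ (shIso K n).hom := by
  simp only [ybar, xbar, shIso, Iso.app_hom]
  rw [Category.assoc, ← Functor.commShiftIso_hom_naturality, ← Functor.map_comp_assoc,
    yMap_comp_shift_xMap]

/-- for positive `l, m, n` with `max (0, l-m) < i ≤ l` and
`max (0, n-m) ≤ j < n`, the composition `(x^j_{m,n})[1] ∘ y^i_{l,m}` equals
`y^(i-j)_{l,n}` if `i - j > max (0, l-n)`, and `0` otherwise. -/
theorem shift_xbar_comp_ybar (l m n : ℕ)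
    (i j : ℕ) (hi : i ≤ l) (hj : n - m ≤ j) :
    ybar K l m i hi ≫ (shiftFunctor (KbT K) (1 : ℤ)).map (xbar K m n j hj) =
      if j < i ∧ l - n < i - j then ybar K l n (i - j) (by omega) else 0 := by
  rw [ybar_comp_shift_xbar]
  split_ifs
  · rw [ybar, show l - i + j = l - (i - j) by omega]
  · obtain hle | hle : l ≤ l - i + j ∨ n ≤ l - i + j := by omega
    · rw [Q_map_yMap_eq_zero_of_le_left K l n _ hle, Limits.zero_comp]
    · rw [Q_map_yMap_eq_zero_of_le_right K l n _ hle, Limits.zero_comp]
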